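/- arXiv:1510.06827 — 3 statements merged into one kernel-verified Lean document; each statement's English description precedes it below -/
import Mathlib

section
/- Let E_u > 0, τ > 0, γ > 0, α ∈ (0,1], K ≥ 1 an integer, β_1,…,β_K > 0 real, and k ∈ {1,…,K}. For each integer M > K set p(M) = E_u / M^γ and define R̃^{a,zf}(M) = log₂(1 + α² τ p(M)² (M−K) β_k² / ((1 + τ p(M) β_k)·Σ_{i=1}^K p(M)β_i/(τ p(M)β_i + 1) + τ p(M) β_k + 1 + (1−α²)(1 + τ p(M)β_k)·Σ_{i=1}^K τ p(M)² β_i²/(1 + τ p(M)β_i))). Then R̃^{a,zf}(M) − log₂(1 + α² τ E_u² β_k² · M^{1−2γ}) → 0 as M → ∞. -/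
/-!
Write `s_M = α² τ E_u² β_k² M^(1-2γ)`. Since `p(M)² (M - K) = E_u² M^(1-2γ) (1 - K/M)`, the
SINR inside the first logarithm is `s_M q_M` with `q_M = (1 - K/M) / D(p(M))`, where the
interference-plus-noise term `D` is continuous in `p` with `D 0 = 1`; as `p(M) → 0`, `q_M → 1`.
The difference of logarithms is `log₂ ((1 + s q) / (1 + s))`, and for `s ≥ 0` this ratio differs
from `1` by at most `|q - 1|`, uniformly in `s`, so no knowledge of how `s_M` itself behaves
(it tends to `0`, a constant or `∞` according to the sign of `1 - 2γ`) is needed.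
-/

open Filter Real Topology

lemma abs_one_add_mul_div_one_add_sub_one_le {s : ℝ} (hs : 0 ≤ s) (q : ℝ) :
    |(1 + s * q) / (1 + s) - 1| ≤ |q - 1| := by
  have hpos : 0 < 1 + s := by linarith
  have hratio : (1 + s * q) / (1 + s) - 1 = s / (1 + s) * (q - 1) := by
    field_simp
    ring
  have hfrac : |s / (1 + s)| ≤ 1 := by
    rw [abs_of_nonneg (by positivity), div_le_one hpos]
    linarith
  rw [hratio, abs_mul]
  exact mul_le_of_le_one_left (abs_nonneg _) hfrac

lemma tendsto_logb_one_add_mul_sub_logb_one_add {ι : Type*} {l : Filter ι} {b : ℝ}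
    {s q : ι → ℝ} (hs : ∀ᶠ x in l, 0 ≤ s x) (hq : Tendsto q l (𝓝 1)) :
    Tendsto (fun x => logb b (1 + s x * q x) - logb b (1 + s x)) l (𝓝 0) := by
  have hratio : Tendsto (fun x => (1 + s x * q x) / (1 + s x)) l (𝓝 1) := by
    rw [tendsto_iff_norm_sub_tendsto_zero]
    refine squeeze_zero_norm' ?_ (tendsto_iff_norm_sub_tendsto_zero.mp hq)
    filter_upwards [hs] with x hx
    simpa only [norm_norm, Real.norm_eq_abs, abs_abs] using
      abs_one_add_mul_div_one_add_sub_one_le hx (q x)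
  have hlog := (continuousAt_logb (b := b) one_ne_zero).tendsto.comp hratio
  rw [logb_one] at hlog
  refine hlog.congr' ?_
  filter_upwards [hs, hq.eventually (lt_mem_nhds zero_lt_one)] with x hsx hqx
  exact logb_div (by positivity) (by positivity)

/-- The denominator of the SINR in the ZF lower bound with aged CSI, as a function of the
per-user transmit power `p`. -/
noncomputable def zfNoiseInterference {ι : Type*} [Fintype ι] (τ α : ℝ) (β : ι → ℝ) (k : ι)
    (p : ℝ) : ℝ :=
  (1 + τ * p * β k) * (∑ i, p * β i / (τ * p * β i + 1)) + τ * p * β k + 1 +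
    (1 - α ^ 2) * (1 + τ * p * β k) * (∑ i, τ * p ^ 2 * β i ^ 2 / (1 + τ * p * β i))

lemma tendsto_zfNoiseInterference {ι : Type*} [Fintype ι] (τ α : ℝ) (β : ι → ℝ) (k : ι) :
    Tendsto (zfNoiseInterference τ α β k) (𝓝 0) (𝓝 1) := by
  have hcont : ContinuousAt (zfNoiseInterference τ α β k) 0 := by
    unfold zfNoiseInterference
    fun_prop (disch := norm_num)
  simpa [zfNoiseInterference] using hcont.tendsto

lemma div_rpow_sq_mul_sub {M : ℝ} (hM : 0 < M) (E γ K : ℝ) :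
    (E / M ^ γ) ^ 2 * (M - K) = E ^ 2 * M ^ (1 - 2 * γ) * (1 - K / M) := by
  rw [rpow_sub hM, rpow_one, mul_comm 2 γ, rpow_mul hM.le, rpow_two]
  have : 0 < M ^ γ := rpow_pos_of_pos hM γ
  field_simp

theorem stmt_2_general (Eu τ γ α : ℝ) (hτ : 0 < τ) (hγ : 0 < γ)
    (K : ℕ) (β : Fin K → ℝ) (k : Fin K) :
    Filter.Tendsto (fun M : ℕ =>
      Real.logb 2 (1 + α ^ 2 * τ * (Eu / (M : ℝ) ^ γ) ^ 2 * ((M : ℝ) - K) * (β k) ^ 2 /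
          ((1 + τ * (Eu / (M : ℝ) ^ γ) * β k) *
              (∑ i, (Eu / (M : ℝ) ^ γ) * β i / (τ * (Eu / (M : ℝ) ^ γ) * β i + 1)) +
            τ * (Eu / (M : ℝ) ^ γ) * β k + 1 +
            (1 - α ^ 2) * (1 + τ * (Eu / (M : ℝ) ^ γ) * β k) *
              (∑ i, τ * (Eu / (M : ℝ) ^ γ) ^ 2 * (β i) ^ 2 / (1 + τ * (Eu / (M : ℝ) ^ γ) * β i)))) -
        Real.logb 2 (1 + α ^ 2 * τ * Eu ^ 2 * (β k) ^ 2 * (M : ℝ) ^ (1 - 2 * γ)))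
      Filter.atTop (nhds 0) := by
  set D : ℕ → ℝ := fun M => zfNoiseInterference τ α β k (Eu / (M : ℝ) ^ γ)
  have hpower : Tendsto (fun M : ℕ => Eu / (M : ℝ) ^ γ) atTop (𝓝 0) :=
    tendsto_const_nhds.div_atTop ((tendsto_rpow_atTop hγ).comp tendsto_natCast_atTop_atTop)
  have hD : Tendsto D atTop (𝓝 1) := (tendsto_zfNoiseInterference τ α β k).comp hpower
  have hq : Tendsto (fun M : ℕ => (1 - K / (M : ℝ)) / D M) atTop (𝓝 1) := by
    have h := ((tendsto_const_nhds (x := (1 : ℝ))).sub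
      (tendsto_const_div_atTop_nhds_zero_nat (K : ℝ))).div hD one_ne_zero
    rwa [sub_zero, div_one] at h
  refine (tendsto_logb_one_add_mul_sub_logb_one_add
    (b := 2) (s := fun M : ℕ => α ^ 2 * τ * Eu ^ 2 * β k ^ 2 * (M : ℝ) ^ (1 - 2 * γ))
    (.of_forall fun M => by positivity) hq).congr' ?_
  filter_upwards [eventually_gt_atTop 0] with M hM
  have hSINR := div_rpow_sq_mul_sub (Nat.cast_pos.mpr hM) Eu γ K
  change _ = logb 2 (1 + _ / D M) - _
  rw [mul_assoc (α ^ 2 * τ) ((Eu / (M : ℝ) ^ γ) ^ 2), hSINR]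
  congr 3
  ring

theorem stmt_2 (Eu τ γ α : ℝ) (hE : 0 < Eu) (hτ : 0 < τ) (hγ : 0 < γ)
    (hα0 : 0 < α) (hα1 : α ≤ 1) (K : ℕ) (hK : 1 ≤ K)
    (β : Fin K → ℝ) (hβ : ∀ i, 0 < β i) (k : Fin K) :
    Filter.Tendsto (fun M : ℕ =>
      Real.logb 2 (1 + α ^ 2 * τ * (Eu / (M : ℝ) ^ γ) ^ 2 * ((M : ℝ) - K) * (β k) ^ 2 /
          ((1 + τ * (Eu / (M : ℝ) ^ γ) * β k) *
              (∑ i, (Eu / (M : ℝ) ^ γ) * β i / (τ * (Eu / (M : ℝ) ^ γ) * β i + 1)) +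
            τ * (Eu / (M : ℝ) ^ γ) * β k + 1 +
            (1 - α ^ 2) * (1 + τ * (Eu / (M : ℝ) ^ γ) * β k) *
              (∑ i, τ * (Eu / (M : ℝ) ^ γ) ^ 2 * (β i) ^ 2 / (1 + τ * (Eu / (M : ℝ) ^ γ) * β i)))) -
        Real.logb 2 (1 + α ^ 2 * τ * Eu ^ 2 * (β k) ^ 2 * (M : ℝ) ^ (1 - 2 * γ)))
      Filter.atTop (nhds 0) :=
  stmt_2_general Eu τ γ α hτ hγ K β k
end

section
/- Let E_u > 0, τ > 0, α ∈ (0,1], K ≥ 1 an integer, β_1,…,β_K > 0 real, and k ∈ {1,…,K}. For each integer M ≥ 2 set p(M) = E_u / √M and define R̃^{a,mrc}(M) = log₂(1 + α² τ p(M)² (M−1) β_k² / (p(M)(1 + τ p(M) β_k)·Σ_{i≠k} β_i + (τ+1) p(M) β_k + 1 + (1−α²) τ p(M)² β_k²)). Then R̃^{a,mrc}(M) → log₂(1 + α² τ E_u² β_k²) as M → ∞. -/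
/-! With `p = E/√M`, the array gain `p² (M - 1)` of the MRC numerator tends to `E²`, while every
term of the interference-plus-noise denominator except the noise power `1` carries a factor `p → 0`.
The SINR therefore tends to `α² τ E² β_k²`, and `logb 2` is continuous at the positive point
`1 + α² τ E² β_k²`. -/

open Filter Topology

theorem tendsto_div_sqrt_natCast_atTop_nhds_zero (c : ℝ) :
    Tendsto (fun M : ℕ => c / √(M : ℝ)) atTop (𝓝 0) :=
  tendsto_const_nhds.div_atTop (Real.tendsto_sqrt_atTop.comp tendsto_natCast_atTop_atTop)

theorem tendsto_div_sqrt_sq_mul_natCast_sub_one (c : ℝ) :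
    Tendsto (fun M : ℕ => (c / √(M : ℝ)) ^ 2 * ((M : ℝ) - 1)) atTop (𝓝 (c ^ 2)) := by
  have h : Tendsto (fun M : ℕ => c ^ 2 * (1 - 1 / (M : ℝ))) atTop (𝓝 (c ^ 2)) := by
    simpa using ((tendsto_const_nhds (x := (1 : ℝ))).sub tendsto_one_div_atTop_nhds_zero_nat).const_mul (c ^ 2)
  refine h.congr' ?_
  filter_upwards [eventually_gt_atTop 0] with M hM
  have hM' : (0 : ℝ) < M := Nat.cast_pos.mpr hM
  rw [div_pow, Real.sq_sqrt hM'.le]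
  field_simp

theorem tendsto_interference_plus_noise {ι : Type*} {l : Filter ι} {p : ι → ℝ}
    (hp : Tendsto p l (𝓝 0)) (τ α b S : ℝ) :
    Tendsto (fun M => p M * (1 + τ * p M * b) * S + (τ + 1) * p M * b + 1 +
      (1 - α ^ 2) * τ * p M ^ 2 * b ^ 2) l (𝓝 1) := by
  have hcont : Continuous fun x : ℝ =>
      x * (1 + τ * x * b) * S + (τ + 1) * x * b + 1 + (1 - α ^ 2) * τ * x ^ 2 * b ^ 2 := by
    fun_prop
  simpa [Function.comp_def] using (hcont.tendsto 0).comp hp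

theorem stmt_3_general (Eu τ α : ℝ) (hτ : 0 < τ) (K : ℕ)
    (β : Fin K → ℝ) (k : Fin K) :
    Filter.Tendsto (fun M : ℕ =>
      Real.logb 2 (1 + α ^ 2 * τ * (Eu / Real.sqrt M) ^ 2 * ((M : ℝ) - 1) * (β k) ^ 2 /
        ((Eu / Real.sqrt M) * (1 + τ * (Eu / Real.sqrt M) * β k) *
            (∑ i ∈ Finset.univ.erase k, β i) +
          (τ + 1) * (Eu / Real.sqrt M) * β k + 1 +
          (1 - α ^ 2) * τ * (Eu / Real.sqrt M) ^ 2 * (β k) ^ 2)))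
      Filter.atTop (nhds (Real.logb 2 (1 + α ^ 2 * τ * Eu ^ 2 * (β k) ^ 2))) := by
  have hsignal := ((tendsto_div_sqrt_sq_mul_natCast_sub_one Eu).const_mul (α ^ 2 * τ)).mul_const
    (β k ^ 2)
  have hden := tendsto_interference_plus_noise (tendsto_div_sqrt_natCast_atTop_nhds_zero Eu)
    τ α (β k) (∑ i ∈ Finset.univ.erase k, β i)
  have hsinr := tendsto_const_nhds (x := (1 : ℝ)).add (hsignal.div hden one_ne_zero)
  rw [div_one] at hsinr
  have hpos : 0 < 1 + α ^ 2 * τ * Eu ^ 2 * β k ^ 2 := by positivity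
  refine (hsinr.logb hpos.ne').congr fun M => ?_
  simp only [Pi.div_apply, mul_assoc]

theorem stmt_3 (Eu τ α : ℝ) (hE : 0 < Eu) (hτ : 0 < τ)
    (hα0 : 0 < α) (hα1 : α ≤ 1) (K : ℕ) (hK : 1 ≤ K)
    (β : Fin K → ℝ) (hβ : ∀ i, 0 < β i) (k : Fin K) :
    Filter.Tendsto (fun M : ℕ =>
      Real.logb 2 (1 + α ^ 2 * τ * (Eu / Real.sqrt M) ^ 2 * ((M : ℝ) - 1) * (β k) ^ 2 /
        ((Eu / Real.sqrt M) * (1 + τ * (Eu / Real.sqrt M) * β k) *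
            (∑ i ∈ Finset.univ.erase k, β i) +
          (τ + 1) * (Eu / Real.sqrt M) * β k + 1 +
          (1 - α ^ 2) * τ * (Eu / Real.sqrt M) ^ 2 * (β k) ^ 2)))
      Filter.atTop (nhds (Real.logb 2 (1 + α ^ 2 * τ * Eu ^ 2 * (β k) ^ 2))) :=
  stmt_3_general Eu τ α hτ K β k
end

section
/- Let p ∈ ℕ, α ∈ (0,1], τ > 0, E_u > 0, K ≥ 1 an integer, β_1,…,β_K > 0 real, and k ∈ {1,…,K}. Let Δ(p,α) be the (p+1)×(p+1) real matrix with entries α^{|i−j|} (indices 0,…,p) and δ(p,α) = (1, α, …, α^p) ∈ ℝ^{p+1}. For each integer M > K set p_u(M) = E_u/√M and, for i ∈ {1,…,K}, c_i(M) = α² β_i² · δ(p,α) (β_i Δ(p,α) + (√M/(τ E_u)) I_{p+1})^{−1} δ(p,α)ᵀ, and define R̃^{p,zf}(M) = log₂(1 + p_u(M)(M−K) c_k(M) / (p_u(M) Σ_{i=1}^K (β_i − c_i(M)) + 1)). Then R̃^{p,zf}(M) → log₂(1 + α² (Σ_{j=0}^p α^{2j}) τ E_u² β_k²) as M → ∞.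 -/
/-!
Put `s = √M / (τ E_u)`. Since `s (βΔ + s I)⁻¹ = (s⁻¹ βΔ + I)⁻¹ → I`, we get
`s c_i(M) → α² β_i² δ ⬝ δ = α² β_i² Σ_{j ≤ p} α^{2j}`. So `c_i(M) = O(1/√M)`: the interference
term `p_u Σ (β_i - c_i)` vanishes, while `p_u (M - K) c_k = τ E_u² (1 - K/M) · s c_k` converges,
and continuity of `log₂` finishes the proof.
-/

open Matrix Filter Topology

namespace Matrix

variable {n 𝕜 : Type*} [Fintype n] [DecidableEq n]

theorem inv_smul_of_ne_zero [Field 𝕜] {k : 𝕜} (hk : k ≠ 0) (A : Matrix n n 𝕜) :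
    (k • A)⁻¹ = k⁻¹ • A⁻¹ := by
  by_cases hA : IsUnit A.det
  · exact inv_smul' A (Units.mk0 k hk) hA
  · have hkA : ¬IsUnit (k • A).det := by
      simpa [det_smul, hk] using hA
    rw [nonsing_inv_apply_not_isUnit _ hkA, nonsing_inv_apply_not_isUnit _ hA, smul_zero]

theorem tendsto_inv_smul_add_one [Field 𝕜] [TopologicalSpace 𝕜] [IsTopologicalRing 𝕜]
    [ContinuousInv₀ 𝕜] (A : Matrix n n 𝕜) :
    Tendsto (fun t : 𝕜 => (t • A + 1)⁻¹) (𝓝 0) (𝓝 1) := by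
  have hinv : ContinuousAt Inv.inv (1 : Matrix n n 𝕜) :=
    continuousAt_matrix_inv _ (by simpa [Ring.inverse_eq_inv'] using continuousAt_inv₀ one_ne_zero)
  have hlin : Tendsto (fun t : 𝕜 => t • A + 1) (𝓝 0) (𝓝 1) :=
    Continuous.tendsto' (by fun_prop) _ _ (by simp)
  simpa only [Function.comp_def, inv_one] using hinv.tendsto.comp hlin

variable [Field 𝕜] [LinearOrder 𝕜] [IsStrictOrderedRing 𝕜] [TopologicalSpace 𝕜] [OrderTopology 𝕜]

theorem tendsto_smul_inv_add_smul_one (A : Matrix n n 𝕜) :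
    Tendsto (fun s : 𝕜 => s • (A + s • 1)⁻¹) atTop (𝓝 1) := by
  refine ((tendsto_inv_smul_add_one A).comp tendsto_inv_atTop_zero).congr' ?_
  filter_upwards [eventually_ne_atTop 0] with s hs
  rw [Function.comp_apply, show A + s • 1 = s • (s⁻¹ • A + 1) by simp [smul_add, smul_smul, hs],
    inv_smul_of_ne_zero hs, smul_smul, mul_inv_cancel₀ hs, one_smul]

theorem tendsto_mul_dotProduct_inv_add_smul_one_mulVec (A : Matrix n n 𝕜) (v w : n → 𝕜) :
    Tendsto (fun s : 𝕜 => s * (v ⬝ᵥ ((A + s • 1)⁻¹ *ᵥ w))) atTop (𝓝 (v ⬝ᵥ w)) := by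
  have hform : Continuous fun B : Matrix n n 𝕜 => v ⬝ᵥ (B *ᵥ w) := by fun_prop
  have hlim := (hform.tendsto 1).comp (tendsto_smul_inv_add_smul_one A)
  rw [one_mulVec] at hlim
  refine hlim.congr fun s => ?_
  simp [smul_mulVec, dotProduct_smul]

end Matrix

theorem dotProduct_pow_self {R : Type*} [CommSemiring R] (a : R) (n : ℕ) :
    (fun j : Fin n => a ^ (j : ℕ)) ⬝ᵥ (fun j : Fin n => a ^ (j : ℕ)) =
      ∑ j ∈ Finset.range n, a ^ (2 * j) := by
  simp only [dotProduct, ← pow_add, two_mul]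
  exact Fin.sum_univ_eq_sum_range (fun j => a ^ (j + j)) n

theorem tendsto_sqrt_natCast_atTop : Tendsto (fun M : ℕ => √(M : ℝ)) atTop atTop :=
  Real.tendsto_sqrt_atTop.comp tendsto_natCast_atTop_atTop

section SqrtScaling

variable {c : ℕ → ℝ} {a L : ℝ}

theorem tendsto_zero_of_tendsto_sqrt_div_mul (ha : a ≠ 0)
    (h : Tendsto (fun M : ℕ => √M / a * c M) atTop (𝓝 L)) : Tendsto c atTop (𝓝 0) := by
  have hsqrt : Tendsto (fun M : ℕ => a / √M) atTop (𝓝 0) :=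
    tendsto_const_nhds.div_atTop tendsto_sqrt_natCast_atTop
  have hprod := h.mul hsqrt
  rw [mul_zero] at hprod
  refine hprod.congr' ?_
  filter_upwards [eventually_gt_atTop 0] with M hM
  have : √(M : ℝ) ≠ 0 := by positivity
  field_simp

theorem tendsto_div_sqrt_mul_sub_mul (ha : a ≠ 0) (b K : ℝ)
    (h : Tendsto (fun M : ℕ => √M / a * c M) atTop (𝓝 L)) :
    Tendsto (fun M : ℕ => b / √M * (M - K) * c M) atTop (𝓝 (a * b * L)) := by
  have hlim := ((tendsto_const_div_atTop_nhds_zero_nat K).const_sub 1).mul (h.const_mul (a * b))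
  rw [sub_zero, one_mul] at hlim
  refine hlim.congr' ?_
  filter_upwards [eventually_gt_atTop 0] with M hM
  have hM' : (0 : ℝ) < M := Nat.cast_pos.mpr hM
  have hsq : √(M : ℝ) ^ 2 = M := Real.sq_sqrt hM'.le
  field_simp
  rw [hsq]
  ring

end SqrtScaling

theorem stmt_8_general (p : ℕ) (α τ Eu : ℝ)
    (hτ : 0 < τ) (hE : 0 < Eu) (K : ℕ)
    (β : Fin K → ℝ) (k : Fin K) :
    Filter.Tendsto (fun M : ℕ =>
      let pu : ℝ := Eu / Real.sqrt M
      let c : Fin K → ℝ := fun i => α ^ 2 * (β i) ^ 2 *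
        ((fun j : Fin (p + 1) => α ^ (j : ℕ)) ⬝ᵥ
          ((β i • (Matrix.of fun a b : Fin (p + 1) => α ^ ((a : ℤ) - (b : ℤ)).natAbs) +
              (Real.sqrt M / (τ * Eu)) • (1 : Matrix (Fin (p + 1)) (Fin (p + 1)) ℝ))⁻¹ *ᵥ
            (fun j : Fin (p + 1) => α ^ (j : ℕ))))
      Real.logb 2 (1 + pu * ((M : ℝ) - K) * c k /
        (pu * (∑ i, (β i - c i)) + 1)))
      Filter.atTop
      (nhds (Real.logb 2
        (1 + α ^ 2 * (∑ j ∈ Finset.range (p + 1), α ^ (2 * j)) * τ * Eu ^ 2 * (β k) ^ 2))) := by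
  set S := ∑ j ∈ Finset.range (p + 1), α ^ (2 * j)
  set δ : Fin (p + 1) → ℝ := fun j => α ^ (j : ℕ)
  set Δ : Matrix (Fin (p + 1)) (Fin (p + 1)) ℝ :=
    Matrix.of fun a b : Fin (p + 1) => α ^ ((a : ℤ) - (b : ℤ)).natAbs
  set c : Fin K → ℕ → ℝ := fun i M =>
    α ^ 2 * β i ^ 2 * (δ ⬝ᵥ ((β i • Δ + (√M / (τ * Eu)) • 1)⁻¹ *ᵥ δ))
  show Tendsto (fun M : ℕ => Real.logb 2
    (1 + Eu / √M * (M - K) * c k M / (Eu / √M * ∑ i, (β i - c i M) + 1))) _ _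
  have hτE : 0 < τ * Eu := mul_pos hτ hE
  have hsc (i : Fin K) :
      Tendsto (fun M : ℕ => √M / (τ * Eu) * c i M) atTop (𝓝 (α ^ 2 * β i ^ 2 * S)) := by
    have hs := tendsto_sqrt_natCast_atTop.atTop_div_const hτE
    rw [← show δ ⬝ᵥ δ = S from dotProduct_pow_self α (p + 1)]
    refine (((tendsto_mul_dotProduct_inv_add_smul_one_mulVec (β i • Δ) δ δ).comp hs).const_mul
      (α ^ 2 * β i ^ 2)).congr fun M => ?_
    simp only [Function.comp_apply, c]
    ring
  have hnum := tendsto_div_sqrt_mul_sub_mul hτE.ne' Eu K (hsc k)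
  rw [show τ * Eu * Eu * (α ^ 2 * β k ^ 2 * S) = α ^ 2 * S * τ * Eu ^ 2 * β k ^ 2 by ring] at hnum
  have hden : Tendsto (fun M : ℕ => Eu / √M * ∑ i, (β i - c i M) + 1) atTop (𝓝 1) := by
    have hpu : Tendsto (fun M : ℕ => Eu / √M) atTop (𝓝 0) :=
      tendsto_const_nhds.div_atTop tendsto_sqrt_natCast_atTop
    have hc (i : Fin K) := tendsto_zero_of_tendsto_sqrt_div_mul hτE.ne' (hsc i)
    simpa using (hpu.mul (tendsto_finsetSum _ fun i _ => (hc i).const_sub (β i))).add_const 1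
  have hS : 0 ≤ S := Finset.sum_nonneg fun j _ => (even_two_mul j).pow_nonneg α
  have hpos : 1 + α ^ 2 * S * τ * Eu ^ 2 * β k ^ 2 ≠ 0 := by positivity
  have harg := (hnum.div hden one_ne_zero).const_add 1
  rw [div_one] at harg
  exact (Real.continuousAt_logb hpos).tendsto.comp harg

theorem stmt_8 (p : ℕ) (α τ Eu : ℝ) (hα0 : 0 < α) (hα1 : α ≤ 1)
    (hτ : 0 < τ) (hE : 0 < Eu) (K : ℕ) (hK : 1 ≤ K)
    (β : Fin K → ℝ) (hβ : ∀ i, 0 < β i) (k : Fin K) :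
    Filter.Tendsto (fun M : ℕ =>
      let pu : ℝ := Eu / Real.sqrt M
      let c : Fin K → ℝ := fun i => α ^ 2 * (β i) ^ 2 *
        ((fun j : Fin (p + 1) => α ^ (j : ℕ)) ⬝ᵥ
          ((β i • (Matrix.of fun a b : Fin (p + 1) => α ^ ((a : ℤ) - (b : ℤ)).natAbs) +
              (Real.sqrt M / (τ * Eu)) • (1 : Matrix (Fin (p + 1)) (Fin (p + 1)) ℝ))⁻¹ *ᵥ
            (fun j : Fin (p + 1) => α ^ (j : ℕ))))
      Real.logb 2 (1 + pu * ((M : ℝ) - K) * c k /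
        (pu * (∑ i, (β i - c i)) + 1)))
      Filter.atTop
      (nhds (Real.logb 2
        (1 + α ^ 2 * (∑ j ∈ Finset.range (p + 1), α ^ (2 * j)) * τ * Eu ^ 2 * (β k) ^ 2))) :=
  stmt_8_general p α τ Eu hτ hE K β k
end
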